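/- arXiv:1210.4650 — 4 statements merged into one kernel-verified Lean document; each statement's English description precedes it below -/
import Mathlib

section
/- Let n ≥ 1, t > 0, α > 1, and let f : ℝⁿ → ℝ be a nonnegative bounded measurable function. Then for all x, y ∈ ℝⁿ, (P_t f(x))^α ≤ P_t(f^α)(y) · exp(α‖x−y‖²/(4(α−1)t)). -/
open MeasureTheory Real

/-- The heat semigroup on ℝⁿ:
`P_t f(x) = (4πt)^{-n/2} ∫ f(z) exp(-‖x-z‖²/(4t)) dz`. -/
noncomputable def heatSG (n : ℕ) (t : ℝ) (f : EuclideanSpace ℝ (Fin n) → ℝ)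
    (x : EuclideanSpace ℝ (Fin n)) : ℝ :=
  (4 * π * t) ^ (-(n : ℝ) / 2) * ∫ z, f z * Real.exp (-‖x - z‖ ^ 2 / (4 * t))

variable {n : ℕ}
local notation "E" => EuclideanSpace ℝ (Fin n)

lemma quad (a : ℝ) (x y z : E) :
    a * ‖x - z‖^2 + (1-a) * ‖y - z‖^2
      = ‖z - (a • x + (1-a) • y)‖^2 + (a*(1-a)) * ‖x - y‖^2 := by
  simp only [← real_inner_self_eq_norm_sq, inner_sub_left, inner_sub_right, inner_add_left,
    inner_add_right, inner_smul_left, inner_smul_right, RCLike.conj_to_real]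
  simp only [real_inner_comm z x, real_inner_comm z y, real_inner_comm y x]
  ring

lemma integrable_gauss (b : ℝ) (hb : 0 < b) (m : E) :
    Integrable (fun z : E => rexp (-b * ‖z - m‖^2)) := by
  have h := (GaussianFourier.integrable_cexp_neg_mul_sq_norm_add (V := E) (b := (b:ℂ))
    (by simpa using hb) 0 (0 : E)).re
  have h2 : Integrable (fun z : E => rexp (-b * ‖z‖^2)) := by
    refine h.congr (Filter.Eventually.of_forall fun z => ?_)
    show (Complex.exp (-(b:ℂ) * (‖z‖:ℂ)^2 + 0 * _)).re = _
    rw [zero_mul, add_zero]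
    norm_cast
  exact h2.comp_sub_right m

lemma integral_gauss (b : ℝ) (hb : 0 < b) (m : E) :
    ∫ z : E, rexp (-b * ‖z - m‖^2) = (π / b) ^ ((n:ℝ) / 2) := by
  rw [integral_sub_right_eq_self (fun z : E => rexp (-b * ‖z‖^2)) m,
    GaussianFourier.integral_rexp_neg_mul_sq_norm hb, finrank_euclideanSpace_fin]

lemma memLp_of_integrable_rpow {X : Type*} [MeasurableSpace X] {μ : Measure X} {u : X → ℝ}
    (hm : AEStronglyMeasurable u μ) {p : ℝ} (hp : 0 < p) (h0 : ∀ z, 0 ≤ u z)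
    (hi : Integrable (fun z => u z ^ p) μ) : MemLp u (ENNReal.ofReal p) μ := by
  have hne : ENNReal.ofReal p ≠ 0 := by simp [ENNReal.ofReal_eq_zero, not_le, hp]
  refine (memLp_norm_rpow_iff (q := ENNReal.ofReal p) hm hne ENNReal.ofReal_ne_top).mp ?_
  rw [ENNReal.div_self hne ENNReal.ofReal_ne_top, memLp_one_iff_integrable]
  refine hi.congr (Filter.Eventually.of_forall fun z => ?_)
  simp only [Real.norm_of_nonneg (h0 z), ENNReal.toReal_ofReal hp.le]


/-- Wang's Harnack inequality for the heat semigroup on ℝⁿ (curvature `CD(0,∞)`):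
`(P_t f(x))^α ≤ P_t(f^α)(y) exp(α ‖x-y‖²/(4(α-1)t))`. -/
theorem wang_harnack_heat (n : ℕ) (hn : 1 ≤ n) (t : ℝ) (ht : 0 < t)
    (α : ℝ) (hα : 1 < α)
    (f : EuclideanSpace ℝ (Fin n) → ℝ) (hf : Measurable f) (hf0 : ∀ z, 0 ≤ f z)
    (C : ℝ) (hfC : ∀ z, f z ≤ C) (x y : EuclideanSpace ℝ (Fin n)) :
    (heatSG n t f x) ^ α ≤
      heatSG n t (fun z => f z ^ α) y * Real.exp (α * ‖x - y‖ ^ 2 / (4 * (α - 1) * t)) := by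
  have hα0 : (0:ℝ) < α := by linarith
  have hα1 : (0:ℝ) < α - 1 := by linarith
  have hπt : (0:ℝ) < 4 * π * t := by positivity
  have hC0 : 0 ≤ C := le_trans (hf0 x) (hfC x)
  set q : ℝ := α / (α - 1) with hqdef
  have hpq : α.HolderConjugate q := (Real.holderConjugate_iff_eq_conjExponent hα).2 rfl
  set c : ℝ := (4 * π * t) ^ (-(n:ℝ)/2) with hc
  have hc0 : 0 < c := Real.rpow_pos_of_pos hπt _
  set m : EuclideanSpace ℝ (Fin n) := q • x + (1 - q) • y with hm
  set D : ℝ := rexp (-(q*(1-q)) * ‖x - y‖^2 / (4*t)) with hD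
  set u : EuclideanSpace ℝ (Fin n) → ℝ :=
    fun z => f z * rexp (-‖y - z‖^2 / (4*t*α)) with hu
  set v : EuclideanSpace ℝ (Fin n) → ℝ :=
    fun z => rexp (-‖x - z‖^2 / (4*t) + ‖y - z‖^2 / (4*t*α)) with hv
  have hu0 : ∀ z, 0 ≤ u z := fun z => mul_nonneg (hf0 z) (Real.exp_pos _).le
  have hv0 : ∀ z, 0 < v z := fun z => Real.exp_pos _
  have huv : ∀ z, f z * rexp (-‖x - z‖^2/(4*t)) = u z * v z := fun z => by
    rw [hu, hv]; dsimp only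
    rw [mul_assoc, ← Real.exp_add]
    congr 2; ring
  have hupow : ∀ z, u z ^ α = f z ^ α * rexp (-‖y - z‖^2 / (4*t)) := fun z => by
    rw [hu]; dsimp only
    rw [Real.mul_rpow (hf0 z) (Real.exp_pos _).le,
      Real.rpow_def_of_pos (Real.exp_pos _), Real.log_exp]
    congr 2
    field_simp
  have hvpow : ∀ z, v z ^ q = rexp (-(1/(4*t)) * ‖z - m‖^2) * D := fun z => by
    rw [hv, hD]; dsimp only
    rw [Real.rpow_def_of_pos (Real.exp_pos _), Real.log_exp, ← Real.exp_add]
    congr 1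
    have e1 : ‖z - m‖^2 = q*‖x-z‖^2 + (1-q)*‖y-z‖^2 - q*(1-q)*‖x - y‖^2 := by
      rw [hm]; linarith [quad q x y z]
    rw [e1, hqdef]
    field_simp
    ring
  -- measurability
  have hgc : Continuous fun z : EuclideanSpace ℝ (Fin n) => rexp (-‖y - z‖^2 / (4*t*α)) := by
    fun_prop
  have hvc : Continuous v := by rw [hv]; fun_prop
  have humeas : AEStronglyMeasurable u volume :=
    (hf.mul hgc.measurable).aestronglyMeasurable
  -- integrability of u^α
  have hUint : Integrable (fun z => u z ^ α) := by
    refine ((integrable_gauss (1/(4*t)) (by positivity) y).const_mul (C^α)).mono'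
      ((humeas.aemeasurable.pow aemeasurable_const).aestronglyMeasurable)
      (Filter.Eventually.of_forall fun z => ?_)
    rw [Real.norm_of_nonneg (Real.rpow_nonneg (hu0 z) _), hupow z]
    have he : rexp (-‖y - z‖^2 / (4*t)) = rexp (-(1/(4*t)) * ‖z - y‖^2) := by
      rw [norm_sub_rev]; congr 1; ring
    rw [he]
    exact mul_le_mul_of_nonneg_right (Real.rpow_le_rpow (hf0 z) (hfC z) hα0.le)
      (Real.exp_pos _).le
  have hVint : Integrable (fun z => v z ^ q) := by
    refine ((integrable_gauss (1/(4*t)) (by positivity) m).mul_const D).congr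
      (Filter.Eventually.of_forall fun z => (hvpow z).symm)
  -- Memℒp
  have hMu : MemLp u (ENNReal.ofReal α) volume :=
    memLp_of_integrable_rpow humeas hα0 hu0 hUint
  have hMv : MemLp v (ENNReal.ofReal q) volume :=
    memLp_of_integrable_rpow hvc.aestronglyMeasurable hpq.symm.pos
      (fun z => (hv0 z).le) hVint
  -- Hölder
  set A : ℝ := ∫ z, u z ^ α with hA
  set B : ℝ := ∫ z, v z ^ q with hB
  set I : ℝ := ∫ z, u z * v z with hI
  have hH : I ≤ A ^ (1/α) * B ^ (1/q) :=
    integral_mul_le_Lp_mul_Lq_of_nonneg hpq (Filter.Eventually.of_forall hu0)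
      (Filter.Eventually.of_forall fun z => (hv0 z).le) hMu hMv
  have hA0 : 0 ≤ A := integral_nonneg fun z => Real.rpow_nonneg (hu0 z) _
  have hI0 : 0 ≤ I := integral_nonneg fun z => mul_nonneg (hu0 z) (hv0 z).le
  have hBval : B = (4*π*t) ^ ((n:ℝ)/2) * D := by
    rw [hB]
    rw [integral_congr_ae (Filter.Eventually.of_forall hvpow)]
    rw [integral_mul_const, integral_gauss _ (by positivity) m]
    congr 2
    field_simp
  have hB0 : 0 < B := by
    rw [hBval]
    positivity
  -- combine
  have key : I ^ α ≤ A * B ^ (α - 1) := by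
    have h1 : (1/α) * α = 1 := by field_simp
    have h2 : (1/q) * α = α - 1 := by rw [hqdef]; field_simp
    calc I ^ α ≤ (A ^ (1/α) * B ^ (1/q)) ^ α :=
          Real.rpow_le_rpow hI0 hH hα0.le
      _ = A * B ^ (α - 1) := by
          rw [Real.mul_rpow (Real.rpow_nonneg hA0 _) (Real.rpow_nonneg hB0.le _),
            ← Real.rpow_mul hA0, ← Real.rpow_mul hB0.le, h1, h2, Real.rpow_one]
  have hLHS : heatSG n t f x = c * I := by
    rw [heatSG, hI]
    congr 1
    exact integral_congr_ae (Filter.Eventually.of_forall huv)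
  have hRHS : heatSG n t (fun z => f z ^ α) y = c * A := by
    rw [heatSG, hA]
    congr 1
    exact integral_congr_ae (Filter.Eventually.of_forall fun z => (hupow z).symm)
  have hcB : c * B = D := by
    rw [hBval, hc, ← mul_assoc, ← Real.rpow_add hπt, neg_div, neg_add_cancel,
      Real.rpow_zero, one_mul]
  have hDexp : D ^ (α - 1) = rexp (α * ‖x - y‖ ^ 2 / (4 * (α - 1) * t)) := by
    rw [hD, Real.rpow_def_of_pos (Real.exp_pos _), Real.log_exp]
    congr 1
    rw [hqdef]
    field_simp
    ring
  calc (heatSG n t f x) ^ α = c ^ α * I ^ α := by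
        rw [hLHS, Real.mul_rpow hc0.le hI0]
    _ ≤ c ^ α * (A * B ^ (α - 1)) :=
        mul_le_mul_of_nonneg_left key (Real.rpow_nonneg hc0.le _)
    _ = (c * A) * ((c * B) ^ (α - 1)) := by
        have hcα : c ^ α = c * c ^ (α - 1) := by
          have hiden : (1:ℝ) + (α - 1) = α := by ring
          nth_rewrite 1 [← hiden]
          rw [Real.rpow_add hc0, Real.rpow_one]
        rw [Real.mul_rpow hc0.le hB0.le, hcα]
        ring
    _ = heatSG n t (fun z => f z ^ α) y * rexp (α * ‖x - y‖ ^ 2 / (4 * (α - 1) * t)) := by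
        rw [hRHS, hcB, hDexp]
end

section
/- Let n ≥ 1, t > 0, and let f : ℝⁿ → ℝ be a measurable function with ε ≤ f ≤ M for some constants 0 < ε ≤ M. Then for all x, y ∈ ℝⁿ, P_t(log f)(x) ≤ log(P_t f(y)) + ‖x−y‖²/(4t). -/
open MeasureTheory Real
open scoped RealInnerProductSpace

section Aux

variable {n : ℕ}

/-- Gaussian integrability on EuclideanSpace. -/
lemma gaussAux_integrable (b : ℝ) (hb : 0 < b) :
    Integrable (fun v : EuclideanSpace ℝ (Fin n) => rexp (-b * ‖v‖ ^ 2)) := by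
  have h := (GaussianFourier.integrable_cexp_neg_mul_sq_norm_add (b := (b : ℂ))
      (by simpa using hb) 0 (0 : EuclideanSpace ℝ (Fin n))).norm
  simpa [Complex.norm_exp, ← Complex.ofReal_pow] using h

/-- Gaussian integral on EuclideanSpace. -/
lemma gaussAux_integral (b : ℝ) (hb : 0 < b) :
    ∫ v : EuclideanSpace ℝ (Fin n), rexp (-b * ‖v‖ ^ 2) = (π / b) ^ ((n : ℝ) / 2) := by
  rw [GaussianFourier.integral_rexp_neg_mul_sq_norm hb]
  norm_num [finrank_euclideanSpace_fin]

/-- `‖v‖ * gaussian` is integrable. -/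
lemma gaussAux_norm_integrable (b : ℝ) (hb : 0 < b) :
    Integrable (fun v : EuclideanSpace ℝ (Fin n) => ‖v‖ * rexp (-b * ‖v‖ ^ 2)) := by
  have hb2 : 0 < b / 2 := by linarith
  refine Integrable.mono ((gaussAux_integrable (n := n) (b / 2) hb2).const_mul
      (max 1 (2 / b))) ?_ ?_
  · exact (continuous_norm.mul (by continuity)).aestronglyMeasurable
  · refine Filter.Eventually.of_forall fun v => ?_
    have h1 : ‖v‖ * rexp (-(b / 2) * ‖v‖ ^ 2) ≤ max 1 (2 / b) := by
      rcases le_total ‖v‖ 1 with h | h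
      · have : rexp (-(b / 2) * ‖v‖ ^ 2) ≤ 1 := by
          apply exp_le_one_iff.mpr; nlinarith [norm_nonneg v, sq_nonneg ‖v‖]
        calc ‖v‖ * rexp (-(b / 2) * ‖v‖ ^ 2) ≤ 1 * 1 := by
              apply mul_le_mul h this (exp_pos _).le zero_le_one
          _ ≤ max 1 (2 / b) := by simp
      · have h2 : ‖v‖ ≤ ‖v‖ ^ 2 := by nlinarith
        have h3 : (b / 2) * ‖v‖ ^ 2 ≤ rexp ((b / 2) * ‖v‖ ^ 2) :=
          le_trans (by linarith [add_one_le_exp ((b / 2) * ‖v‖ ^ 2)]) le_rfl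
        have h5 : ‖v‖ ^ 2 ≤ (2 / b) * rexp ((b / 2) * ‖v‖ ^ 2) := by
          have he : ‖v‖ ^ 2 = (2 / b) * ((b / 2) * ‖v‖ ^ 2) := by
            rw [← mul_assoc, div_mul_div_comm]
            rw [show (2 : ℝ) * b / (b * 2) = 1 by rw [mul_comm]; exact div_self (by positivity)]
            ring
          calc ‖v‖ ^ 2 = (2 / b) * ((b / 2) * ‖v‖ ^ 2) := he
            _ ≤ (2 / b) * rexp ((b / 2) * ‖v‖ ^ 2) :=
                mul_le_mul_of_nonneg_left h3 (by positivity)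
        have h4 : ‖v‖ ^ 2 * rexp (-(b / 2) * ‖v‖ ^ 2) ≤ 2 / b := by
          calc ‖v‖ ^ 2 * rexp (-(b / 2) * ‖v‖ ^ 2)
              ≤ (2 / b) * rexp ((b / 2) * ‖v‖ ^ 2) * rexp (-(b / 2) * ‖v‖ ^ 2) :=
                mul_le_mul_of_nonneg_right h5 (exp_pos _).le
            _ = (2 / b) * rexp ((b / 2) * ‖v‖ ^ 2 + -(b / 2) * ‖v‖ ^ 2) := by
                rw [mul_assoc, exp_add]
            _ = 2 / b := by simp
        calc ‖v‖ * rexp (-(b / 2) * ‖v‖ ^ 2) ≤ ‖v‖ ^ 2 * rexp (-(b / 2) * ‖v‖ ^ 2) :=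
              mul_le_mul_of_nonneg_right h2 (exp_pos _).le
          _ ≤ 2 / b := h4
          _ ≤ max 1 (2 / b) := le_max_right _ _
    have hsplit : rexp (-b * ‖v‖ ^ 2) = rexp (-(b / 2) * ‖v‖ ^ 2) * rexp (-(b / 2) * ‖v‖ ^ 2) := by
      rw [← exp_add]; ring_nf
    have hnn : 0 ≤ ‖v‖ * rexp (-b * ‖v‖ ^ 2) := by positivity
    rw [Real.norm_of_nonneg hnn, Real.norm_of_nonneg (by positivity)]
    rw [hsplit, ← mul_assoc]
    exact mul_le_mul_of_nonneg_right h1 (exp_pos _).le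

/-- Odd Gaussian moment vanishes. -/
lemma gaussAux_odd (b : ℝ) (v : EuclideanSpace ℝ (Fin n)) :
    ∫ z : EuclideanSpace ℝ (Fin n), ⟪v, z⟫ * rexp (-b * ‖z‖ ^ 2) = 0 := by
  have h := integral_neg_eq_self (fun z : EuclideanSpace ℝ (Fin n) =>
    ⟪v, z⟫ * rexp (-b * ‖z‖ ^ 2)) volume
  simp only [inner_neg_right, norm_neg, neg_mul] at h
  rw [integral_neg] at h
  simp only [neg_mul] at h ⊢
  linarith

variable {t : ℝ}

/-- The heat kernel as a function of `z`, rewritten in gaussian form. -/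
lemma kerAux_eq (ht : 0 < t) (p z : EuclideanSpace ℝ (Fin n)) :
    rexp (-‖p - z‖ ^ 2 / (4 * t)) = rexp (-(4 * t)⁻¹ * ‖z - p‖ ^ 2) := by
  rw [norm_sub_rev]
  congr 1
  field_simp

lemma kerAux_integrable (ht : 0 < t) (p : EuclideanSpace ℝ (Fin n)) :
    Integrable (fun z => rexp (-‖p - z‖ ^ 2 / (4 * t))) := by
  have hb : (0 : ℝ) < (4 * t)⁻¹ := by positivity
  have h := (gaussAux_integrable (n := n) (4 * t)⁻¹ hb).comp_sub_right p
  refine h.congr (Filter.Eventually.of_forall fun z => ?_)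
  exact (kerAux_eq ht p z).symm

lemma kerAux_integral (ht : 0 < t) (p : EuclideanSpace ℝ (Fin n)) :
    ∫ z, rexp (-‖p - z‖ ^ 2 / (4 * t)) = (4 * π * t) ^ ((n : ℝ) / 2) := by
  have hb : (0 : ℝ) < (4 * t)⁻¹ := by positivity
  calc ∫ z, rexp (-‖p - z‖ ^ 2 / (4 * t))
      = ∫ z : EuclideanSpace ℝ (Fin n), rexp (-(4 * t)⁻¹ * ‖z - p‖ ^ 2) := by
        exact integral_congr_ae (Filter.Eventually.of_forall fun z => kerAux_eq ht p z)
    _ = ∫ z : EuclideanSpace ℝ (Fin n), rexp (-(4 * t)⁻¹ * ‖z‖ ^ 2) :=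
        integral_sub_right_eq_self (fun z => rexp (-(4 * t)⁻¹ * ‖z‖ ^ 2)) p
    _ = (π / (4 * t)⁻¹) ^ ((n : ℝ) / 2) := gaussAux_integral _ hb
    _ = (4 * π * t) ^ ((n : ℝ) / 2) := by
        congr 1
        field_simp

/-- Integrability of a bounded measurable function against the heat kernel. -/
lemma kerAux_mul_integrable (ht : 0 < t) (p : EuclideanSpace ℝ (Fin n))
    (g : EuclideanSpace ℝ (Fin n) → ℝ) (hg : Measurable g) (C : ℝ)
    (hC : ∀ z, |g z| ≤ C) :
    Integrable (fun z => g z * rexp (-‖p - z‖ ^ 2 / (4 * t))) := by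
  refine Integrable.mono ((kerAux_integrable ht p).const_mul C) ?_ ?_
  · exact (hg.mul (by fun_prop)).aestronglyMeasurable
  · refine Filter.Eventually.of_forall fun z => ?_
    have h1 : (0 : ℝ) ≤ C := le_trans (abs_nonneg _) (hC z)
    rw [Real.norm_of_nonneg (by positivity : (0:ℝ) ≤ C * rexp (-‖p - z‖ ^ 2 / (4 * t)))]
    rw [norm_mul, Real.norm_of_nonneg (exp_pos _).le]
    exact mul_le_mul_of_nonneg_right (hC z) (exp_pos _).le

/-- Integrability of the linear term against the heat kernel. -/
lemma kerAux_inner_integrable (ht : 0 < t) (p v : EuclideanSpace ℝ (Fin n)) :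
    Integrable (fun z => ⟪v, z - p⟫ * rexp (-‖p - z‖ ^ 2 / (4 * t))) := by
  have hb : (0 : ℝ) < (4 * t)⁻¹ := by positivity
  have hI : Integrable (fun w : EuclideanSpace ℝ (Fin n) =>
      ⟪v, w⟫ * rexp (-(4 * t)⁻¹ * ‖w‖ ^ 2)) := by
    refine Integrable.mono ((gaussAux_norm_integrable (n := n) _ hb).const_mul ‖v‖) ?_ ?_
    · exact ((continuous_const.inner continuous_id').mul (by continuity)).aestronglyMeasurable
    · refine Filter.Eventually.of_forall fun w => ?_
      rw [norm_mul, Real.norm_of_nonneg (exp_pos _).le,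
        Real.norm_of_nonneg (by positivity : (0:ℝ) ≤ ‖v‖ * (‖w‖ * rexp (-(4 * t)⁻¹ * ‖w‖ ^ 2)))]
      rw [← mul_assoc]
      exact mul_le_mul_of_nonneg_right
        ((abs_real_inner_le_norm v w).trans le_rfl) (exp_pos _).le
  have h := hI.comp_sub_right p
  refine h.congr (Filter.Eventually.of_forall fun z => ?_)
  simp only [kerAux_eq ht p]

/-- The odd moment of the heat kernel vanishes. -/
lemma kerAux_inner_integral (ht : 0 < t) (p v : EuclideanSpace ℝ (Fin n)) :
    ∫ z, ⟪v, z - p⟫ * rexp (-‖p - z‖ ^ 2 / (4 * t)) = 0 := by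
  have hb : (0 : ℝ) < (4 * t)⁻¹ := by positivity
  calc ∫ z, ⟪v, z - p⟫ * rexp (-‖p - z‖ ^ 2 / (4 * t))
      = ∫ z : EuclideanSpace ℝ (Fin n), ⟪v, z - p⟫ * rexp (-(4 * t)⁻¹ * ‖z - p‖ ^ 2) :=
        integral_congr_ae (Filter.Eventually.of_forall fun z => by simp only [kerAux_eq ht p])
    _ = ∫ z : EuclideanSpace ℝ (Fin n), ⟪v, z⟫ * rexp (-(4 * t)⁻¹ * ‖z‖ ^ 2) :=
        integral_sub_right_eq_self (fun z => ⟪v, z⟫ * rexp (-(4 * t)⁻¹ * ‖z‖ ^ 2)) p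
    _ = 0 := gaussAux_odd _ v

end Aux

/-- Log-Harnack inequality for the heat semigroup on ℝⁿ (curvature `CD(0,∞)`):
`P_t(log f)(x) ≤ log(P_t f(y)) + ‖x-y‖²/(4t)`. -/
theorem log_harnack_heat (n : ℕ) (hn : 1 ≤ n) (t : ℝ) (ht : 0 < t)
    (f : EuclideanSpace ℝ (Fin n) → ℝ) (hf : Measurable f)
    (ε M : ℝ) (hε : 0 < ε) (hεM : ε ≤ M) (hfb : ∀ z, ε ≤ f z ∧ f z ≤ M)
    (x y : EuclideanSpace ℝ (Fin n)) :
    heatSG n t (fun z => Real.log (f z)) x ≤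
      Real.log (heatSG n t f y) + ‖x - y‖ ^ 2 / (4 * t) := by
  set S : ℝ := (4 * π * t) ^ ((n : ℝ) / 2) with hS
  set c0 : ℝ := (4 * π * t) ^ (-(n : ℝ) / 2) with hc0
  have h4t : (0 : ℝ) < 4 * π * t := by positivity
  have hc0pos : 0 < c0 := rpow_pos_of_pos h4t _
  have hSpos : 0 < S := rpow_pos_of_pos h4t _
  have hc0S : c0 * S = 1 := by
    rw [hc0, hS, ← rpow_add h4t, show -(n : ℝ) / 2 + (n : ℝ) / 2 = 0 by ring, rpow_zero]
  have hfpos : ∀ z, 0 < f z := fun z => lt_of_lt_of_le hε (hfb z).1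
  have hKint : ∀ p : EuclideanSpace ℝ (Fin n),
      Integrable (fun z => rexp (-‖p - z‖ ^ 2 / (4 * t))) := fun p => kerAux_integrable ht p
  have hKS : ∀ p : EuclideanSpace ℝ (Fin n),
      ∫ z, rexp (-‖p - z‖ ^ 2 / (4 * t)) = S := fun p => kerAux_integral ht p
  have hMpos : 0 < M := lt_of_lt_of_le hε hεM
  have hfK : Integrable (fun z => f z * rexp (-‖y - z‖ ^ 2 / (4 * t))) := by
    refine kerAux_mul_integrable ht y f hf M fun z => ?_
    rw [abs_of_pos (hfpos z)]; exact (hfb z).2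
  set I : ℝ := ∫ z, f z * rexp (-‖y - z‖ ^ 2 / (4 * t)) with hI
  have hIpos : 0 < I := by
    have h1 : ∫ z, ε * rexp (-‖y - z‖ ^ 2 / (4 * t)) ≤ I := by
      refine integral_mono ((hKint y).const_mul ε) hfK fun z => ?_
      exact mul_le_mul_of_nonneg_right (hfb z).1 (exp_pos _).le
    rw [integral_const_mul, hKS] at h1
    nlinarith
  set P : ℝ := c0 * I with hP
  have hPpos : 0 < P := mul_pos hc0pos hIpos
  have hPeq : heatSG n t f y = P := rfl
  set v : EuclideanSpace ℝ (Fin n) := y - x with hv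
  set q : EuclideanSpace ℝ (Fin n) → ℝ :=
    fun z => (‖y - z‖ ^ 2 - ‖x - z‖ ^ 2) / (4 * t) with hq
  have hqid : ∀ z, q z = (‖v‖ ^ 2 - 2 * ⟪v, z - x⟫) / (4 * t) := by
    intro z
    have h1 : ‖y - z‖ ^ 2 = ‖v‖ ^ 2 - 2 * ⟪v, z - x⟫ + ‖z - x‖ ^ 2 := by
      have hyz : y - z = v - (z - x) := by rw [hv]; abel
      rw [hyz, norm_sub_sq_real]
    have h2 : ‖x - z‖ ^ 2 = ‖z - x‖ ^ 2 := by rw [norm_sub_rev]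
    simp only [hq]
    rw [h1, h2]
    ring
  have hqdecomp : (fun z => q z * rexp (-‖x - z‖ ^ 2 / (4 * t))) =
      fun z => (‖v‖ ^ 2 / (4 * t)) * rexp (-‖x - z‖ ^ 2 / (4 * t)) -
        (2 / (4 * t)) * (⟪v, z - x⟫ * rexp (-‖x - z‖ ^ 2 / (4 * t))) := by
    funext z
    rw [hqid z]
    field_simp
  have hqKint : Integrable (fun z => q z * rexp (-‖x - z‖ ^ 2 / (4 * t))) := by
    rw [hqdecomp]
    exact (((hKint x).const_mul _)).sub ((kerAux_inner_integrable ht x v).const_mul _)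
  have hqKval : ∫ z, q z * rexp (-‖x - z‖ ^ 2 / (4 * t)) = ‖v‖ ^ 2 / (4 * t) * S := by
    rw [hqdecomp, integral_sub ((hKint x).const_mul _)
        ((kerAux_inner_integrable ht x v).const_mul _),
      integral_const_mul, integral_const_mul, hKS, kerAux_inner_integral ht x v]
    ring
  have hlogbound : ∀ z, |Real.log (f z)| ≤ |Real.log ε| + |Real.log M| := by
    intro z
    have h1 : Real.log ε ≤ Real.log (f z) := Real.log_le_log hε (hfb z).1
    have h2 : Real.log (f z) ≤ Real.log M := Real.log_le_log (hfpos z) (hfb z).2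
    rw [abs_le]
    constructor
    · calc -(|Real.log ε| + |Real.log M|) ≤ -|Real.log ε| := by
            linarith [abs_nonneg (Real.log M)]
        _ ≤ Real.log ε := neg_abs_le _
        _ ≤ Real.log (f z) := h1
    · calc Real.log (f z) ≤ Real.log M := h2
        _ ≤ |Real.log M| := le_abs_self _
        _ ≤ |Real.log ε| + |Real.log M| := by linarith [abs_nonneg (Real.log ε)]
  have hlogKint : Integrable (fun z => Real.log (f z) * rexp (-‖x - z‖ ^ 2 / (4 * t))) :=
    kerAux_mul_integrable ht x _ (hf.log) _ hlogbound
  have hconstKint : Integrable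
      (fun z => (Real.log P - 1) * rexp (-‖x - z‖ ^ 2 / (4 * t))) :=
    (hKint x).const_mul (Real.log P - 1)
  have hBC : Integrable (fun z =>
      (Real.log P - 1) * rexp (-‖x - z‖ ^ 2 / (4 * t)) +
        q z * rexp (-‖x - z‖ ^ 2 / (4 * t))) := hconstKint.add hqKint
  have hRint : Integrable (fun z =>
      (f z * rexp (-‖y - z‖ ^ 2 / (4 * t))) / P +
        ((Real.log P - 1) * rexp (-‖x - z‖ ^ 2 / (4 * t)) +
          q z * rexp (-‖x - z‖ ^ 2 / (4 * t)))) :=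
    (hfK.div_const P).add hBC
  have hptwise : ∀ z, Real.log (f z) * rexp (-‖x - z‖ ^ 2 / (4 * t)) ≤
      (f z * rexp (-‖y - z‖ ^ 2 / (4 * t))) / P +
        ((Real.log P - 1) * rexp (-‖x - z‖ ^ 2 / (4 * t)) +
          q z * rexp (-‖x - z‖ ^ 2 / (4 * t))) := by
    intro z
    have hKxpos : 0 < rexp (-‖x - z‖ ^ 2 / (4 * t)) := exp_pos _
    have hKypos : 0 < rexp (-‖y - z‖ ^ 2 / (4 * t)) := exp_pos _
    set g : ℝ := f z * rexp (-‖y - z‖ ^ 2 / (4 * t)) / rexp (-‖x - z‖ ^ 2 / (4 * t)) with hg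
    have hgpos : 0 < g := div_pos (mul_pos (hfpos z) hKypos) hKxpos
    have htan : Real.log (g / P) ≤ g / P - 1 :=
      Real.log_le_sub_one_of_pos (div_pos hgpos hPpos)
    have hlogdiv : Real.log (g / P) = Real.log g - Real.log P :=
      Real.log_div hgpos.ne' hPpos.ne'
    have hlogg : Real.log g = Real.log (f z) - q z := by
      rw [hg, Real.log_div (mul_pos (hfpos z) hKypos).ne' hKxpos.ne',
        Real.log_mul (hfpos z).ne' hKypos.ne']
      simp only [Real.log_exp, hq]
      ring
    have hmain : Real.log (f z) ≤ g / P + (Real.log P - 1) + q z := by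
      have h5 : Real.log g ≤ g / P - 1 + Real.log P := by
        rw [hlogdiv] at htan; linarith
      rw [hlogg] at h5; linarith
    have hgK : g * rexp (-‖x - z‖ ^ 2 / (4 * t)) =
        f z * rexp (-‖y - z‖ ^ 2 / (4 * t)) := div_mul_cancel₀ _ hKxpos.ne'
    calc Real.log (f z) * rexp (-‖x - z‖ ^ 2 / (4 * t))
        ≤ (g / P + (Real.log P - 1) + q z) * rexp (-‖x - z‖ ^ 2 / (4 * t)) :=
          mul_le_mul_of_nonneg_right hmain hKxpos.le
      _ = (f z * rexp (-‖y - z‖ ^ 2 / (4 * t))) / P +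
            ((Real.log P - 1) * rexp (-‖x - z‖ ^ 2 / (4 * t)) +
              q z * rexp (-‖x - z‖ ^ 2 / (4 * t))) := by
          rw [add_mul, add_mul, div_mul_eq_mul_div, hgK]; ring
  have hint : ∫ z, Real.log (f z) * rexp (-‖x - z‖ ^ 2 / (4 * t)) ≤
      ∫ z, ((f z * rexp (-‖y - z‖ ^ 2 / (4 * t))) / P +
        ((Real.log P - 1) * rexp (-‖x - z‖ ^ 2 / (4 * t)) +
          q z * rexp (-‖x - z‖ ^ 2 / (4 * t)))) :=
    integral_mono hlogKint hRint hptwise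
  have hRval : ∫ z, ((f z * rexp (-‖y - z‖ ^ 2 / (4 * t))) / P +
        ((Real.log P - 1) * rexp (-‖x - z‖ ^ 2 / (4 * t)) +
          q z * rexp (-‖x - z‖ ^ 2 / (4 * t))))
      = I / P + ((Real.log P - 1) * S + ‖v‖ ^ 2 / (4 * t) * S) := by
    rw [integral_add (hfK.div_const P) hBC,
      integral_add hconstKint hqKint,
      integral_div, integral_const_mul, hKS, hqKval]
  rw [hRval] at hint
  have hLHS : heatSG n t (fun z => Real.log (f z)) x =
      c0 * ∫ z, Real.log (f z) * rexp (-‖x - z‖ ^ 2 / (4 * t)) := rfl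
  rw [hLHS, hPeq]
  have hnormv : ‖x - y‖ = ‖v‖ := by rw [hv, norm_sub_rev]
  rw [hnormv]
  have hfinal : c0 * (I / P + ((Real.log P - 1) * S + ‖v‖ ^ 2 / (4 * t) * S))
      = Real.log P + ‖v‖ ^ 2 / (4 * t) := by
    have h1 : c0 * (I / P) = 1 := by
      rw [hP]; field_simp
    calc c0 * (I / P + ((Real.log P - 1) * S + ‖v‖ ^ 2 / (4 * t) * S))
        = c0 * (I / P) + (Real.log P - 1) * (c0 * S) + ‖v‖ ^ 2 / (4 * t) * (c0 * S) := by
          ring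
      _ = 1 + (Real.log P - 1) * 1 + ‖v‖ ^ 2 / (4 * t) * 1 := by rw [h1, hc0S]
      _ = Real.log P + ‖v‖ ^ 2 / (4 * t) := by ring
  calc c0 * ∫ z, Real.log (f z) * rexp (-‖x - z‖ ^ 2 / (4 * t))
      ≤ c0 * (I / P + ((Real.log P - 1) * S + ‖v‖ ^ 2 / (4 * t) * S)) :=
        mul_le_mul_of_nonneg_left hint hc0pos.le
    _ = Real.log P + ‖v‖ ^ 2 / (4 * t) := hfinal
end

section
/- Let n ≥ 1, t, s > 0, and let f : ℝⁿ → ℝ be a bounded continuous function. Then for every x ∈ ℝⁿ, P_t(Q_s f)(x) ≤ Q_s(P_t f)(x): the heat semigroup and the Hopf–Lax semigroup commute in this order under nonnegative curvature. -/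
open MeasureTheory Real

/-- The Hopf–Lax infimum-convolution semigroup:
`Q_s f(x) = inf_y [ f(y) + ‖x-y‖²/(2s) ]`. -/
noncomputable def hopfLax (n : ℕ) (s : ℝ) (f : EuclideanSpace ℝ (Fin n) → ℝ)
    (x : EuclideanSpace ℝ (Fin n)) : ℝ :=
  ⨅ y : EuclideanSpace ℝ (Fin n), (f y + ‖x - y‖ ^ 2 / (2 * s))

section aux

variable {n : ℕ}

local notation "E" => EuclideanSpace ℝ (Fin n)

/-- infimum of a continuous function over a dense sequence. -/
lemma iInf_denseSeq (φ : EuclideanSpace ℝ (Fin n) → ℝ) (hφ : Continuous φ) (m : ℝ)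
    (hm : ∀ y, m ≤ φ y) :
    ⨅ y : EuclideanSpace ℝ (Fin n), φ y = ⨅ k : ℕ, φ (TopologicalSpace.denseSeq (EuclideanSpace ℝ (Fin n)) k) := by
  have hbdd : BddBelow (Set.range φ) := ⟨m, by rintro _ ⟨y, rfl⟩; exact hm y⟩
  have hbdd2 : BddBelow (Set.range fun k => φ (TopologicalSpace.denseSeq (EuclideanSpace ℝ (Fin n)) k)) :=
    ⟨m, by rintro _ ⟨k, rfl⟩; exact hm _⟩
  refine le_antisymm (le_ciInf fun k => ciInf_le hbdd _) (le_ciInf fun y => ?_)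
  have hy : y ∈ closure (Set.range (TopologicalSpace.denseSeq (EuclideanSpace ℝ (Fin n)))) := by
    rw [(TopologicalSpace.denseRange_denseSeq (EuclideanSpace ℝ (Fin n))).closure_range]; trivial
  obtain ⟨g, hg, hgy⟩ := mem_closure_iff_seq_limit.1 hy
  have htend : Filter.Tendsto (fun i => φ (g i)) Filter.atTop (nhds (φ y)) :=
    (hφ.tendsto y).comp hgy
  refine ge_of_tendsto htend (Filter.Eventually.of_forall fun i => ?_)
  obtain ⟨k, hk⟩ := hg i
  calc ⨅ k : ℕ, φ (TopologicalSpace.denseSeq (EuclideanSpace ℝ (Fin n)) k) ≤ _ := ciInf_le hbdd2 k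
  _ = φ (g i) := by rw [hk]

end aux

/-- Commutation between the heat and Hopf–Lax semigroups on ℝⁿ under nonnegative
curvature: `P_t(Q_s f) ≤ Q_s(P_t f)`. -/
theorem heat_hopfLax_commutation (n : ℕ) (hn : 1 ≤ n) (t s : ℝ) (ht : 0 < t) (hs : 0 < s)
    (f : EuclideanSpace ℝ (Fin n) → ℝ) (hf : Continuous f)
    (C : ℝ) (hfC : ∀ z, |f z| ≤ C) (x : EuclideanSpace ℝ (Fin n)) :
    heatSG n t (hopfLax n s f) x ≤ hopfLax n s (heatSG n t f) x := by
  have hC0 : 0 ≤ C := (abs_nonneg _).trans (hfC 0)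
  set b : ℝ := 1 / (4 * t) with hb
  have hbpos : 0 < b := by positivity
  set G : EuclideanSpace ℝ (Fin n) → ℝ := fun z => Real.exp (-‖x - z‖ ^ 2 / (4 * t)) with hG
  have hGform : ∀ z, G z = Real.exp (-b * ‖z - x‖ ^ 2) := by
    intro z
    simp only [hG, norm_sub_rev x z]
    rw [hb]
    ring_nf
  have hGpos : ∀ z, 0 < G z := fun z => Real.exp_pos _
  have hGle : ∀ z, G z ≤ 1 := by
    intro z
    rw [hGform z]
    exact Real.exp_le_one_iff.2 (by nlinarith [sq_nonneg (‖z - x‖)])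
  -- integrability of the Gaussian
  have hGauss : Integrable (fun z : EuclideanSpace ℝ (Fin n) => Real.exp (-b * ‖z‖ ^ 2)) := by
    have h := GaussianFourier.integrable_cexp_neg_mul_sq_norm_add (V := EuclideanSpace ℝ (Fin n))
      (b := (b : ℂ)) (by simpa using hbpos) 0 (0 : EuclideanSpace ℝ (Fin n))
    have := h.norm
    refine this.congr (Filter.Eventually.of_forall fun z => ?_)
    simp only [zero_mul, add_zero]
    rw [show -(b:ℂ) * (‖z‖:ℂ) ^ 2 = ((-b * ‖z‖ ^ 2 : ℝ) : ℂ) by push_cast; ring,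
      Complex.norm_exp_ofReal]
  have hGint : Integrable G := by
    have := hGauss.comp_sub_right x
    exact this.congr (Filter.Eventually.of_forall fun z => (hGform z).symm)
  have hGcont : Continuous G := by
    apply Real.continuous_exp.comp
    exact (continuous_const.sub continuous_id').norm.pow 2 |>.neg.div_const _
  -- bounds and measurability of Q = hopfLax
  set Q : EuclideanSpace ℝ (Fin n) → ℝ := hopfLax n s f with hQ
  have hterm : ∀ z y : EuclideanSpace ℝ (Fin n), -C ≤ f y + ‖z - y‖ ^ 2 / (2 * s) := by
    intro z y
    have h1 := (abs_le.1 (hfC y)).1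
    have h2 : (0:ℝ) ≤ ‖z - y‖ ^ 2 / (2 * s) := by positivity
    linarith
  have hQle : ∀ z, -C ≤ Q z := by
    intro z
    exact le_ciInf fun y => hterm z y
  have hQub : ∀ z, Q z ≤ C := by
    intro z
    calc Q z ≤ f z + ‖z - z‖ ^ 2 / (2 * s) :=
          ciInf_le ⟨-C, by rintro _ ⟨y, rfl⟩; exact hterm z y⟩ z
      _ = f z := by simp
      _ ≤ C := (abs_le.1 (hfC z)).2
  have hQmeas : Measurable Q := by
    have : Q = fun z => ⨅ k : ℕ,
        (f (TopologicalSpace.denseSeq (EuclideanSpace ℝ (Fin n)) k) + ‖z - TopologicalSpace.denseSeq (EuclideanSpace ℝ (Fin n)) k‖ ^ 2 / (2 * s)) := by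
      funext z
      exact iInf_denseSeq (fun y => f y + ‖z - y‖ ^ 2 / (2 * s))
        (hf.add ((continuous_const.sub continuous_id').norm.pow 2 |>.div_const _)) (-C) (hterm z)
    rw [this]
    exact Measurable.iInf fun k => (continuous_const.add
      ((continuous_id'.sub continuous_const).norm.pow 2 |>.div_const _)).measurable
  have hQGint : Integrable (fun z => Q z * G z) :=
    hGint.bdd_mul hQmeas.aestronglyMeasurable
      (Filter.Eventually.of_forall fun z => abs_le.2 ⟨hQle z, hQub z⟩)
  -- main bound: for each y, heatSG Q x ≤ heatSG f y + ‖x-y‖²/(2s)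
  have key : ∀ y : EuclideanSpace ℝ (Fin n), heatSG n t Q x ≤ heatSG n t f y + ‖x - y‖ ^ 2 / (2 * s) := by
    intro y
    set a : EuclideanSpace ℝ (Fin n) := y - x with ha
    set c0 : ℝ := ‖x - y‖ ^ 2 / (2 * s) with hc0
    have hc00 : 0 ≤ c0 := by positivity
    have hpt : ∀ z : EuclideanSpace ℝ (Fin n), Q z ≤ f (z + a) + c0 := by
      intro z
      have h1 : Q z ≤ f (z + a) + ‖z - (z + a)‖ ^ 2 / (2 * s) :=
        ciInf_le ⟨-C, by rintro _ ⟨w, rfl⟩; exact hterm z w⟩ (z + a)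
      have h2 : ‖z - (z + a)‖ = ‖x - y‖ := by
        have : z - (z + a) = x - y := by rw [ha]; abel
        rw [this]
      rw [h2] at h1
      exact h1
    have hRHSint : Integrable (fun z => (f (z + a) + c0) * G z) := by
      refine hGint.bdd_mul (c := C + c0) ?_ (Filter.Eventually.of_forall fun z => ?_)
      · have : Continuous fun z : EuclideanSpace ℝ (Fin n) => f (z + a) + c0 :=
          (hf.comp (continuous_id'.add continuous_const)).add continuous_const
        exact this.aestronglyMeasurable
      · have := hfC (z + a)
        rw [Real.norm_eq_abs]
        calc |f (z + a) + c0| ≤ |f (z + a)| + |c0| := abs_add_le _ _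
          _ ≤ C + c0 := by rw [abs_of_nonneg hc00]; exact add_le_add (hfC _) le_rfl
    have hmono : ∫ z, Q z * G z ≤ ∫ z, (f (z + a) + c0) * G z := by
      refine integral_mono hQGint hRHSint fun z => ?_
      exact mul_le_mul_of_nonneg_right (hpt z) (hGpos z).le
    -- translation identity for the f-part
    have htrans : ∫ z : EuclideanSpace ℝ (Fin n), f (z + a) * G z = ∫ z : EuclideanSpace ℝ (Fin n), f z * Real.exp (-‖y - z‖ ^ 2 / (4 * t)) := by
      have : ∀ z : EuclideanSpace ℝ (Fin n), f (z + a) * G z =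
          (fun w : EuclideanSpace ℝ (Fin n) => f w * Real.exp (-‖y - w‖ ^ 2 / (4 * t))) (z + a) := by
        intro z
        have hxz : y - (z + a) = x - z := by rw [ha]; abel
        simp only [hG, hxz]
      simp_rw [this]
      exact integral_add_right_eq_self (fun w : EuclideanSpace ℝ (Fin n) => f w * Real.exp (-‖y - w‖ ^ 2 / (4 * t))) a
    -- Gaussian total mass
    have hmass : ∫ z : EuclideanSpace ℝ (Fin n), G z = (4 * π * t) ^ ((n : ℝ) / 2) := by
      have h1 : ∫ z : EuclideanSpace ℝ (Fin n), G z = ∫ z : EuclideanSpace ℝ (Fin n), Real.exp (-b * ‖z‖ ^ 2) := by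
        simp_rw [hGform]
        exact integral_sub_right_eq_self (fun w : EuclideanSpace ℝ (Fin n) => Real.exp (-b * ‖w‖ ^ 2)) x
      rw [h1, GaussianFourier.integral_rexp_neg_mul_sq_norm hbpos]
      rw [finrank_euclideanSpace_fin]
      rw [hb]
      congr 1
      field_simp
    have hcpos : (0:ℝ) < (4 * π * t) ^ (-(n : ℝ) / 2) :=
      Real.rpow_pos_of_pos (by positivity) _
    have hcancel : (4 * π * t) ^ (-(n : ℝ) / 2) * (4 * π * t) ^ ((n : ℝ) / 2) = 1 := by
      rw [← Real.rpow_add (by positivity), neg_div, neg_add_cancel, Real.rpow_zero]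
    calc heatSG n t Q x = (4 * π * t) ^ (-(n : ℝ) / 2) * ∫ z, Q z * G z := rfl
      _ ≤ (4 * π * t) ^ (-(n : ℝ) / 2) * ∫ z, (f (z + a) + c0) * G z :=
          mul_le_mul_of_nonneg_left hmono hcpos.le
      _ = (4 * π * t) ^ (-(n : ℝ) / 2) *
          ((∫ z, f (z + a) * G z) + c0 * ∫ z, G z) := by
          congr 1
          simp_rw [add_mul]
          rw [integral_add (by
            refine hGint.bdd_mul ?_ (Filter.Eventually.of_forall fun z => by rw [Real.norm_eq_abs]; exact hfC _)
            have : Continuous fun z : EuclideanSpace ℝ (Fin n) => f (z + a) :=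
              hf.comp (continuous_id'.add continuous_const)
            exact this.aestronglyMeasurable)
            (hGint.const_mul c0)]
          rw [integral_const_mul]
      _ = heatSG n t f y + c0 := by
          rw [htrans, hmass, mul_add, heatSG]
          congr 1
          rw [← mul_assoc, mul_comm _ c0, mul_assoc, hcancel, mul_one]
      _ = heatSG n t f y + ‖x - y‖ ^ 2 / (2 * s) := rfl
  exact le_ciInf key
end

section
/- Let n ≥ 1, t, s > 0, and let f : ℝⁿ → ℝ be a bounded continuous function. Then for every x ∈ ℝⁿ, P_t(Q_1 f)(x) ≤ Q_1(P_s f)(x) + n(√t − √s)²: the dimensional commutation property between the heat flow on ℝⁿ (which satisfies the curvature-dimension condition CD(0,n)) and the Hopf–Lax semigroup. -/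
open MeasureTheory Real

lemma rpow_two_eq (x : ℝ) : x ^ (2:ℝ) = x ^ 2 := by
  rw [show (2:ℝ) = ((2:ℕ):ℝ) by norm_num, Real.rpow_natCast]

lemma integrable_sq_gauss_1d {b : ℝ} (hb : 0 < b) :
    Integrable fun x : ℝ => x ^ 2 * rexp (-b * x ^ 2) := by
  have h := integrable_rpow_mul_exp_neg_mul_sq hb (s := 2) (by norm_num)
  simpa only [rpow_two_eq] using h

lemma gauss_moment_Ioi {b : ℝ} (hb : 0 < b) :
    ∫ x : ℝ in Set.Ioi 0, x ^ 2 * rexp (-b * x ^ 2) = b ^ (-(3:ℝ)/2) * (1/2) * Real.Gamma (3/2) := by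
  have h := integral_rpow_mul_exp_neg_mul_rpow (p := 2) (q := 2) (by norm_num) (by norm_num) hb
  simp only [rpow_two_eq] at h
  rw [h]; norm_num

lemma gauss_moment_1d {b : ℝ} (hb : 0 < b) :
    ∫ x : ℝ, x ^ 2 * rexp (-b * x ^ 2) = (2*b)⁻¹ * Real.sqrt (π/b) := by
  have hint := integrable_sq_gauss_1d hb
  have hIic : ∫ x : ℝ in Set.Iic 0, x ^ 2 * rexp (-b * x ^ 2)
      = ∫ x : ℝ in Set.Ioi 0, x ^ 2 * rexp (-b * x ^ 2) := by
    rw [← neg_zero, ← integral_comp_neg_Ioi, neg_zero]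
    congr 1; ext x; ring_nf
  rw [← intervalIntegral.integral_Iic_add_Ioi (b := 0) hint.integrableOn hint.integrableOn, hIic,
    gauss_moment_Ioi hb]
  have hG : Real.Gamma (3/2) = Real.sqrt π / 2 := by
    rw [show (3/2:ℝ) = 1/2 + 1 by norm_num, Real.Gamma_add_one (by norm_num),
      Real.Gamma_one_half_eq]; ring
  have hb32 : b ^ (-(3:ℝ)/2) = (b * Real.sqrt b)⁻¹ := by
    rw [show -(3:ℝ)/2 = -(1 + 1/2) by norm_num, Real.rpow_neg hb.le, Real.rpow_add hb,
      Real.rpow_one, ← Real.sqrt_eq_rpow]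
  have hsq : Real.sqrt (π / b) = Real.sqrt π / Real.sqrt b := Real.sqrt_div pi_pos.le b
  have hsb : 0 < Real.sqrt b := Real.sqrt_pos.2 hb
  rw [hG, hb32, hsq]
  field_simp
  ring

lemma gauss_nd {n : ℕ} {b : ℝ} (hb : 0 < b) :
    ∫ v : EuclideanSpace ℝ (Fin n), rexp (-b * ‖v‖^2) = (π / b) ^ ((n:ℝ) / 2) := by
  rw [GaussianFourier.integral_rexp_neg_mul_sq_norm hb]
  simp

lemma sqrt_pow_nat {B : ℝ} (hB : 0 ≤ B) (n : ℕ) : Real.sqrt B ^ n = B ^ ((n:ℝ)/2) := by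
  rw [Real.sqrt_eq_rpow, ← Real.rpow_natCast (B ^ ((1:ℝ)/2)) n, ← Real.rpow_mul hB]
  norm_num
  rw [mul_comm, mul_one_div]

lemma gauss_moment_nd {n : ℕ} (hn : 1 ≤ n) {b : ℝ} (hb : 0 < b) :
    ∫ v : EuclideanSpace ℝ (Fin n), ‖v‖^2 * rexp (-b * ‖v‖^2)
      = n * (2*b)⁻¹ * (π / b) ^ ((n:ℝ) / 2) := by
  have hmp := (EuclideanSpace.volume_preserving_symm_measurableEquiv_toLp (Fin n)).symm
  rw [← hmp.integral_comp (MeasurableEquiv.measurableEmbedding _)]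
  have hnorm : ∀ y : Fin n → ℝ,
      ‖(MeasurableEquiv.toLp 2 (Fin n → ℝ)).symm.symm y‖^2 = ∑ i, y i ^ 2 := by
    intro y
    simp only [MeasurableEquiv.symm_symm, MeasurableEquiv.coe_toLp,
      EuclideanSpace.norm_eq, Real.norm_eq_abs, sq_abs]
    rw [Real.sq_sqrt]
    exact Finset.sum_nonneg fun i _ => by positivity
  simp only [Function.comp_def, hnorm]
  have hsplit : ∀ y : Fin n → ℝ,
      (∑ i, y i ^ 2) * rexp (-b * ∑ i, y i ^ 2)
        = ∑ i, ∏ j, (if j = i then fun x => x^2 * rexp (-b * x^2) else fun x => rexp (-b * x^2)) (y j) := by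
    intro y
    rw [Finset.mul_sum, Real.exp_sum, Finset.sum_mul]
    refine Finset.sum_congr rfl fun i _ => ?_
    rw [← Finset.mul_prod_erase _ _ (Finset.mem_univ i),
      ← Finset.mul_prod_erase _ (fun j => (if j = i then fun x => x^2 * rexp (-b * x^2) else fun x => rexp (-b * x^2)) (y j)) (Finset.mem_univ i)]
    simp only [if_pos rfl]
    rw [← mul_assoc]
    congr 1
    refine Finset.prod_congr rfl fun j hj => ?_
    rw [if_neg (Finset.ne_of_mem_erase hj)]
  simp only [hsplit]
  rw [integral_finset_sum]
  · have hterm : ∀ i : Fin n,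
        (∫ y : Fin n → ℝ, ∏ j, (if j = i then fun x => x^2 * rexp (-b * x^2) else fun x => rexp (-b * x^2)) (y j))
          = ((2*b)⁻¹ * Real.sqrt (π/b)) * Real.sqrt (π/b) ^ (n-1) := by
      intro i
      rw [MeasureTheory.integral_fintype_prod_volume_eq_prod (ι := Fin n)
        (f := fun j => (if j = i then fun x => x^2 * rexp (-b * x^2) else fun x => rexp (-b * x^2)))]
      rw [← Finset.mul_prod_erase _ _ (Finset.mem_univ i)]
      simp only [eq_self_iff_true, if_true]
      rw [gauss_moment_1d hb]
      congr 1
      rw [Finset.prod_congr rfl (fun j hj => by rw [if_neg (Finset.ne_of_mem_erase hj)]),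
        Finset.prod_const, integral_gaussian, Finset.card_erase_of_mem (Finset.mem_univ i),
        Finset.card_univ, Fintype.card_fin]
    simp only [hterm, Finset.sum_const, Finset.card_univ, Fintype.card_fin, nsmul_eq_mul]
    rw [mul_assoc ((2*b)⁻¹), ← pow_succ', Nat.sub_add_cancel hn,
      sqrt_pow_nat (by positivity) n]
    ring
  · intro i _
    apply MeasureTheory.Integrable.fintype_prod
      (f := fun j => (if j = i then fun x => x^2 * rexp (-b * x^2) else fun x => rexp (-b * x^2)))
    intro j
    by_cases h : j = i
    · simpa [h] using integrable_sq_gauss_1d hb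
    · simpa [h] using integrable_exp_neg_mul_sq hb


variable {n : ℕ}

local notation "E" => EuclideanSpace ℝ (Fin n)

lemma inner_gauss_zero {b : ℝ} (w : E) :
    ∫ v : E, (inner ℝ v w : ℝ) * rexp (-b * ‖v‖^2) = 0 := by
  have h := integral_neg_eq_self (fun v : E => (inner ℝ v w : ℝ) * rexp (-b * ‖v‖^2)) volume
  simp only [inner_neg_left, norm_neg, neg_mul, integral_neg] at h
  simp only [neg_mul]
  linarith

lemma integrable_gauss_nd {b : ℝ} (hb : 0 < b) :
    Integrable fun v : E => rexp (-b * ‖v‖^2) := by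
  have h := (GaussianFourier.integrable_cexp_neg_mul_sq_norm_add (V := E)
    (b := (b:ℂ)) (by simpa using hb) 0 0).norm
  apply h.congr
  refine Filter.Eventually.of_forall fun v => ?_
  simp [Complex.norm_exp, ← Complex.ofReal_pow]

lemma sq_gauss_le {b : ℝ} (hb : 0 < b) (r : ℝ) (hr : 0 ≤ r) :
    r * rexp (-b * r) ≤ b⁻¹ := by
  have h1 : b * r ≤ rexp (b * r) := by
    have := Real.add_one_le_exp (b * r); linarith
  have h2 : 0 < rexp (b * r) := Real.exp_pos _
  rw [neg_mul, Real.exp_neg, ← div_eq_mul_inv, div_le_iff₀ h2]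
  have hr' : r = b⁻¹ * (b * r) := by field_simp
  rw [hr']
  have := mul_le_mul_of_nonneg_left h1 (inv_nonneg.2 hb.le)
  calc b⁻¹ * (b*r) ≤ b⁻¹ * rexp (b*r) := this
    _ = b⁻¹ * rexp (b * (b⁻¹ * (b*r))) := by rw [← mul_assoc, mul_inv_cancel₀ hb.ne', one_mul]

lemma integrable_sq_gauss_nd {b : ℝ} (hb : 0 < b) :
    Integrable fun v : E => ‖v‖^2 * rexp (-b * ‖v‖^2) := by
  apply Integrable.mono' (((integrable_gauss_nd (n := n) (b := b/2) (half_pos hb)).const_mul (2/b)))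
  · exact ((continuous_norm.pow 2).mul
      (Real.continuous_exp.comp (by continuity))).aestronglyMeasurable
  · refine Filter.Eventually.of_forall fun v => ?_
    have key := sq_gauss_le (half_pos hb) (‖v‖^2) (by positivity)
    have hsplit : rexp (-b * ‖v‖^2) = rexp (-(b/2) * ‖v‖^2) * rexp (-(b/2) * ‖v‖^2) := by
      rw [← Real.exp_add]; ring_nf
    have he : 0 < rexp (-(b/2) * ‖v‖^2) := Real.exp_pos _
    rw [Real.norm_eq_abs, abs_of_nonneg (by positivity), hsplit]
    calc ‖v‖^2 * (rexp (-(b/2) * ‖v‖^2) * rexp (-(b/2) * ‖v‖^2))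
        = (‖v‖^2 * rexp (-(b/2) * ‖v‖^2)) * rexp (-(b/2) * ‖v‖^2) := by ring
      _ ≤ (b/2)⁻¹ * rexp (-(b/2) * ‖v‖^2) := mul_le_mul_of_nonneg_right key he.le
      _ = 2/b * rexp (-(b/2) * ‖v‖^2) := by rw [inv_div]

lemma norm_le_one_add_sq (r : ℝ) : r ≤ 1 + r^2 := by nlinarith [sq_nonneg (r-1)]

lemma integrable_inner_gauss {b : ℝ} (hb : 0 < b) (w : E) :
    Integrable fun v : E => (inner ℝ v w : ℝ) * rexp (-b * ‖v‖^2) := by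
  apply Integrable.mono' (((integrable_gauss_nd (n := n) hb).const_mul ‖w‖).add
    ((integrable_sq_gauss_nd (n := n) hb).const_mul ‖w‖))
  · exact ((continuous_inner.comp (continuous_id.prodMk continuous_const)).mul
      (Real.continuous_exp.comp (by continuity))).aestronglyMeasurable
  · refine Filter.Eventually.of_forall fun v => ?_
    have he : 0 < rexp (-b * ‖v‖^2) := Real.exp_pos _
    have h1 : |(inner ℝ v w : ℝ)| ≤ ‖v‖ * ‖w‖ := abs_real_inner_le_norm v w
    have h2 : ‖v‖ ≤ 1 + ‖v‖^2 := norm_le_one_add_sq _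
    rw [Real.norm_eq_abs, abs_mul, abs_of_nonneg he.le]
    have hw : 0 ≤ ‖w‖ := norm_nonneg w
    calc |(inner ℝ v w : ℝ)| * rexp (-b * ‖v‖^2)
        ≤ (‖v‖ * ‖w‖) * rexp (-b * ‖v‖^2) := mul_le_mul_of_nonneg_right h1 he.le
      _ ≤ ((1 + ‖v‖^2) * ‖w‖) * rexp (-b * ‖v‖^2) := by
          apply mul_le_mul_of_nonneg_right (mul_le_mul_of_nonneg_right h2 hw) he.le
      _ = ‖w‖ * rexp (-b * ‖v‖^2) + ‖w‖ * (‖v‖^2 * rexp (-b * ‖v‖^2)) := by ring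

lemma integrable_bounded_gauss {b : ℝ} (hb : 0 < b) {g : E → ℝ}
    (hg : AEStronglyMeasurable g volume) {C : ℝ} (hC : ∀ z, |g z| ≤ C) (x0 : E) :
    Integrable fun z : E => g z * rexp (-b * ‖z - x0‖^2) := by
  have hbase : Integrable fun z : E => rexp (-b * ‖z - x0‖^2) :=
    Integrable.comp_sub_right (integrable_gauss_nd (n := n) hb) x0
  apply Integrable.mono' (hbase.const_mul C)
  · exact hg.mul (Real.continuous_exp.comp (by continuity)).aestronglyMeasurable
  · refine Filter.Eventually.of_forall fun v => ?_
    have he : 0 < rexp (-b * ‖v - x0‖^2) := Real.exp_pos _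
    rw [Real.norm_eq_abs, abs_mul, abs_of_nonneg he.le]
    exact mul_le_mul_of_nonneg_right (hC v) he.le




lemma hopfLax_bddBelow {s : ℝ} (hs : 0 < s) {f : E → ℝ} {C : ℝ} (hfC : ∀ z, |f z| ≤ C) (x : E) :
    BddBelow (Set.range fun y : E => f y + ‖x - y‖ ^ 2 / (2 * s)) := by
  refine ⟨-C, ?_⟩
  rintro - ⟨y, rfl⟩
  have h1 : -C ≤ f y := neg_le_of_abs_le (hfC y)
  have h2 : 0 ≤ ‖x - y‖ ^ 2 / (2 * s) := by positivity
  linarith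

lemma hopfLax_le {s : ℝ} (hs : 0 < s) {f : E → ℝ} {C : ℝ} (hfC : ∀ z, |f z| ≤ C) (x y : E) :
    hopfLax n s f x ≤ f y + ‖x - y‖ ^ 2 / (2 * s) :=
  ciInf_le (hopfLax_bddBelow hs hfC x) y

lemma neg_C_le_hopfLax {s : ℝ} (hs : 0 < s) {f : E → ℝ} {C : ℝ} (hfC : ∀ z, |f z| ≤ C) (x : E) :
    -C ≤ hopfLax n s f x := by
  refine le_ciInf fun y => ?_
  have h1 : -C ≤ f y := neg_le_of_abs_le (hfC y)
  have h2 : 0 ≤ ‖x - y‖ ^ 2 / (2 * s) := by positivity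
  linarith

lemma hopfLax_le_C {s : ℝ} (hs : 0 < s) {f : E → ℝ} {C : ℝ} (hfC : ∀ z, |f z| ≤ C) (x : E) :
    hopfLax n s f x ≤ C := by
  have h := hopfLax_le hs hfC x x
  have h0 : f x + ‖x - x‖ ^ 2 / (2 * s) = f x := by simp
  rw [h0] at h
  exact h.trans (le_of_abs_le (hfC x))

lemma hopfLax_abs_le {s : ℝ} (hs : 0 < s) {f : E → ℝ} {C : ℝ} (hfC : ∀ z, |f z| ≤ C) (x : E) :
    |hopfLax n s f x| ≤ C :=
  abs_le.2 ⟨neg_C_le_hopfLax hs hfC x, hopfLax_le_C hs hfC x⟩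

lemma hopfLax_measurable {s : ℝ} (hs : 0 < s) {f : E → ℝ} (hf : Continuous f)
    {C : ℝ} (hfC : ∀ z, |f z| ≤ C) :
    Measurable fun x : E => hopfLax n s f x := by
  have hne : Nonempty E := ⟨0⟩
  set u : ℕ → E := TopologicalSpace.denseSeq E with hu
  have hrep : ∀ x : E, hopfLax n s f x = ⨅ i : ℕ, (f (u i) + ‖x - u i‖ ^ 2 / (2 * s)) := by
    intro x
    apply le_antisymm
    · exact le_ciInf fun i => hopfLax_le hs hfC x (u i)
    · refine le_ciInf fun y => ?_
      apply le_of_forall_pos_le_add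
      intro ε hε
      have hg : Continuous fun y' : E => f y' + ‖x - y'‖ ^ 2 / (2 * s) := by
        apply hf.add; continuity
      have hU : IsOpen {z : E | f z + ‖x - z‖ ^ 2 / (2 * s) < f y + ‖x - y‖ ^ 2 / (2 * s) + ε} :=
        isOpen_lt hg continuous_const
      obtain ⟨i, hi⟩ := (TopologicalSpace.denseRange_denseSeq E).exists_mem_open hU
        ⟨y, by simp [Set.mem_setOf_eq]; linarith⟩
      have hb : BddBelow (Set.range fun i : ℕ => f (u i) + ‖x - u i‖ ^ 2 / (2 * s)) := by
        refine ⟨-C, ?_⟩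
        rintro - ⟨i, rfl⟩
        have h1 : -C ≤ f (u i) := neg_le_of_abs_le (hfC _)
        have h2 : 0 ≤ ‖x - u i‖ ^ 2 / (2 * s) := by positivity
        linarith
      exact (ciInf_le hb i).trans (le_of_lt hi)
  simp only [hrep]
  exact Measurable.iInf fun i => (by continuity : Continuous fun x : E =>
    f (u i) + ‖x - u i‖ ^ 2 / (2 * s)).measurable

/-- Dimensional commutation property between the heat flow on ℝⁿ (which satisfies
`CD(0,n)`) and the Hopf–Lax semigroup: `P_t(Q_1 f) ≤ Q_1(P_s f) + n(√t - √s)²`. -/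
theorem heat_hopfLax_dimensional_commutation (n : ℕ) (hn : 1 ≤ n) (t s : ℝ)
    (ht : 0 < t) (hs : 0 < s)
    (f : EuclideanSpace ℝ (Fin n) → ℝ) (hf : Continuous f)
    (C : ℝ) (hfC : ∀ z, |f z| ≤ C) (x : EuclideanSpace ℝ (Fin n)) :
    heatSG n t (hopfLax n 1 f) x ≤
      hopfLax n 1 (heatSG n s f) x + n * (Real.sqrt t - Real.sqrt s) ^ 2 := by
  set b : ℝ := (4*t)⁻¹ with hb_def
  have hb : 0 < b := by positivity
  set b' : ℝ := (4*s)⁻¹ with hb'_def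
  have hb' : 0 < b' := by positivity
  set a : ℝ := Real.sqrt (s/t) with ha_def
  have ha : 0 < a := Real.sqrt_pos.2 (by positivity)
  have ha2 : a^2 = s/t := Real.sq_sqrt (by positivity)
  set ct : ℝ := (4*π*t) ^ (-(n:ℝ)/2) with hct_def
  set cs : ℝ := (4*π*s) ^ (-(n:ℝ)/2) with hcs_def
  have hct : 0 < ct := by positivity
  set P : ℝ := (π/b) ^ ((n:ℝ)/2) with hP_def
  -- key algebraic facts
  have hts : t * (1-a)^2 = (Real.sqrt t - Real.sqrt s)^2 := by
    have h1 : Real.sqrt t ^ 2 = t := Real.sq_sqrt ht.le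
    have h2 : Real.sqrt t * a = Real.sqrt s := by
      rw [ha_def, ← Real.sqrt_mul ht.le, mul_div_cancel₀ _ ht.ne']
    calc t * (1-a)^2 = (Real.sqrt t * (1-a))^2 := by rw [mul_pow, h1]
      _ = (Real.sqrt t - Real.sqrt s)^2 := by rw [mul_sub, mul_one, h2]
  have hc2 : ct * P = 1 := by
    rw [hct_def, hP_def, hb_def]
    rw [show π / (4*t)⁻¹ = 4*π*t by field_simp]
    rw [← Real.rpow_add (by positivity), show -(n:ℝ)/2 + (n:ℝ)/2 = 0 by ring, Real.rpow_zero]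
  have hmom : (2*b)⁻¹ = 2*t := by rw [hb_def]; field_simp; ring
  have han : a ^ n = (s/t) ^ ((n:ℝ)/2) := sqrt_pow_nat (by positivity) n
  have hc1 : ct * (a^n)⁻¹ = cs := by
    rw [hct_def, hcs_def, han, ← Real.rpow_neg (by positivity),
      show (-((n:ℝ)/2)) = -(n:ℝ)/2 from (neg_div 2 (n:ℝ)).symm,
      ← Real.mul_rpow (by positivity) (by positivity)]
    congr 1
    field_simp
  -- bounds and measurability of the Hopf-Lax transform
  have hQmeas := hopfLax_measurable one_pos hf hfC
  have hQC : ∀ z, |hopfLax n 1 f z| ≤ C := fun z => hopfLax_abs_le one_pos hfC z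
  -- kernel rewriting
  have hkt : ∀ (z u : EuclideanSpace ℝ (Fin n)),
      rexp (-‖u - z‖^2/(4*t)) = rexp (-b * ‖z - u‖^2) := by
    intro z u; rw [norm_sub_rev]; congr 1; rw [hb_def]; ring
  have hks : ∀ (z u : EuclideanSpace ℝ (Fin n)),
      rexp (-‖u - z‖^2/(4*s)) = rexp (-b' * ‖z - u‖^2) := by
    intro z u; rw [norm_sub_rev]; congr 1; rw [hb'_def]; ring
  have key : ∀ y : EuclideanSpace ℝ (Fin n), heatSG n t (hopfLax n 1 f) x ≤
      heatSG n s f y + ‖x - y‖^2/2 + (n:ℝ) * (Real.sqrt t - Real.sqrt s)^2 := by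
    intro y
    have hpt : ∀ z : EuclideanSpace ℝ (Fin n),
        hopfLax n 1 f z * rexp (-b * ‖z - x‖^2) ≤
        (f (y + a • (z - x)) + ‖z - (y + a • (z - x))‖^2/(2*1)) * rexp (-b * ‖z - x‖^2) :=
      fun z => mul_le_mul_of_nonneg_right (hopfLax_le one_pos hfC z (y + a • (z - x)))
        (Real.exp_pos _).le
    have hexp : ∀ z : EuclideanSpace ℝ (Fin n),
        (‖z - (y + a • (z - x))‖^2/(2*1)) * rexp (-b * ‖z - x‖^2)
        = ((1-a)^2/2) * (‖z - x‖^2 * rexp (-b * ‖z - x‖^2))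
          + (1-a) * ((inner ℝ (z - x) (x - y) : ℝ) * rexp (-b * ‖z - x‖^2))
          + (‖x - y‖^2/2) * rexp (-b * ‖z - x‖^2) := by
      intro z
      have hz : z - (y + a • (z - x)) = (1-a) • (z - x) + (x - y) := by
        rw [sub_smul, one_smul]; abel
      rw [hz, norm_add_sq_real, norm_smul, real_inner_smul_left, Real.norm_eq_abs,
        mul_pow, sq_abs]
      ring
    -- integrability
    have IQ : Integrable fun z : EuclideanSpace ℝ (Fin n) =>
        hopfLax n 1 f z * rexp (-b * ‖z - x‖^2) :=
      integrable_bounded_gauss hb hQmeas.aestronglyMeasurable hQC x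
    have IA : Integrable fun z : EuclideanSpace ℝ (Fin n) =>
        f (y + a • (z - x)) * rexp (-b * ‖z - x‖^2) := by
      refine integrable_bounded_gauss hb ?_ (fun z => hfC _) x
      exact (hf.comp (continuous_const.add ((continuous_id.sub continuous_const).const_smul a))).aestronglyMeasurable
    have Isq : Integrable fun z : EuclideanSpace ℝ (Fin n) =>
        ‖z - x‖^2 * rexp (-b * ‖z - x‖^2) := (integrable_sq_gauss_nd hb).comp_sub_right x
    have Iin : Integrable fun z : EuclideanSpace ℝ (Fin n) =>
        (inner ℝ (z - x) (x - y) : ℝ) * rexp (-b * ‖z - x‖^2) :=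
      (integrable_inner_gauss hb (x - y)).comp_sub_right x
    have Ig : Integrable fun z : EuclideanSpace ℝ (Fin n) =>
        rexp (-b * ‖z - x‖^2) := (integrable_gauss_nd hb).comp_sub_right x
    have IB : Integrable fun z : EuclideanSpace ℝ (Fin n) =>
        (‖z - (y + a • (z - x))‖^2/(2*1)) * rexp (-b * ‖z - x‖^2) := by
      rw [show (fun z : EuclideanSpace ℝ (Fin n) =>
          (‖z - (y + a • (z - x))‖^2/(2*1)) * rexp (-b * ‖z - x‖^2))
        = fun z => ((1-a)^2/2) * (‖z - x‖^2 * rexp (-b * ‖z - x‖^2))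
          + (1-a) * ((inner ℝ (z - x) (x - y) : ℝ) * rexp (-b * ‖z - x‖^2))
          + (‖x - y‖^2/2) * rexp (-b * ‖z - x‖^2) from funext hexp]
      exact ((Isq.const_mul _).add (Iin.const_mul _)).add (Ig.const_mul _)
    have IAB : Integrable fun z : EuclideanSpace ℝ (Fin n) =>
        (f (y + a • (z - x)) + ‖z - (y + a • (z - x))‖^2/(2*1)) * rexp (-b * ‖z - x‖^2) := by
      rw [show (fun z : EuclideanSpace ℝ (Fin n) =>
          (f (y + a • (z - x)) + ‖z - (y + a • (z - x))‖^2/(2*1)) * rexp (-b * ‖z - x‖^2))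
        = fun z => f (y + a • (z - x)) * rexp (-b * ‖z - x‖^2)
            + (‖z - (y + a • (z - x))‖^2/(2*1)) * rexp (-b * ‖z - x‖^2) from
          funext fun z => by ring]
      exact IA.add IB
    -- value of the f-part
    have hAval : ∫ z : EuclideanSpace ℝ (Fin n), f (y + a • (z - x)) * rexp (-b * ‖z - x‖^2)
        = (a^n)⁻¹ * ∫ z : EuclideanSpace ℝ (Fin n), f z * rexp (-b' * ‖z - y‖^2) := by
      have step_a1 : ∫ z : EuclideanSpace ℝ (Fin n), f (y + a • (z - x)) * rexp (-b * ‖z - x‖^2)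
          = ∫ w : EuclideanSpace ℝ (Fin n), f (y + a • w) * rexp (-b * ‖w‖^2) :=
        integral_sub_right_eq_self (μ := volume)
          (fun w : EuclideanSpace ℝ (Fin n) => f (y + a • w) * rexp (-b * ‖w‖^2)) x
      have step_a2 : ∀ w : EuclideanSpace ℝ (Fin n),
          f (y + a • w) * rexp (-b * ‖w‖^2) = f (y + a • w) * rexp (-b' * ‖a • w‖^2) := by
        intro w
        congr 2
        have hsm : ‖a • w‖^2 = (s/t) * ‖w‖^2 := by
          rw [norm_smul, mul_pow, Real.norm_eq_abs, sq_abs, ha2]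
        rw [hsm, hb_def, hb'_def]
        field_simp
      have step_a3 : ∫ w : EuclideanSpace ℝ (Fin n), f (y + a • w) * rexp (-b' * ‖a • w‖^2)
          = (a^n)⁻¹ * ∫ w' : EuclideanSpace ℝ (Fin n), f (y + w') * rexp (-b' * ‖w'‖^2) := by
        have h := MeasureTheory.Measure.integral_comp_smul_of_nonneg (μ := volume)
          (fun w' : EuclideanSpace ℝ (Fin n) => f (y + w') * rexp (-b' * ‖w'‖^2)) a
          (hR := Real.sqrt_nonneg _)
        rw [finrank_euclideanSpace_fin, smul_eq_mul] at h
        exact h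
      have step_a4 : ∫ w' : EuclideanSpace ℝ (Fin n), f (y + w') * rexp (-b' * ‖w'‖^2)
          = ∫ z : EuclideanSpace ℝ (Fin n), f z * rexp (-b' * ‖z - y‖^2) := by
        have h := integral_sub_right_eq_self (μ := volume)
          (fun w' : EuclideanSpace ℝ (Fin n) => f (y + w') * rexp (-b' * ‖w'‖^2)) y
        rw [← h]
        apply integral_congr_ae
        refine Filter.Eventually.of_forall fun z => ?_
        simp only [add_sub_cancel]
      rw [step_a1]
      simp only [step_a2]
      rw [step_a3, step_a4]
    -- value of the quadratic part
    have jsq : ∫ z : EuclideanSpace ℝ (Fin n), ‖z - x‖^2 * rexp (-b * ‖z - x‖^2)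
        = (n:ℝ) * (2*b)⁻¹ * P := by
      have h := integral_sub_right_eq_self (μ := volume)
        (fun v : EuclideanSpace ℝ (Fin n) => ‖v‖^2 * rexp (-b * ‖v‖^2)) x
      exact h.trans ((gauss_moment_nd hn hb).trans (by rw [hP_def]))
    have jin : ∫ z : EuclideanSpace ℝ (Fin n),
        (inner ℝ (z - x) (x - y) : ℝ) * rexp (-b * ‖z - x‖^2) = 0 := by
      have h := integral_sub_right_eq_self (μ := volume)
        (fun v : EuclideanSpace ℝ (Fin n) => (inner ℝ v (x - y) : ℝ) * rexp (-b * ‖v‖^2)) x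
      exact h.trans (inner_gauss_zero (x - y))
    have jg : ∫ z : EuclideanSpace ℝ (Fin n), rexp (-b * ‖z - x‖^2) = P := by
      have h := integral_sub_right_eq_self (μ := volume)
        (fun v : EuclideanSpace ℝ (Fin n) => rexp (-b * ‖v‖^2)) x
      exact h.trans ((gauss_nd hb).trans (by rw [hP_def]))
    have hBval : ∫ z : EuclideanSpace ℝ (Fin n),
        (‖z - (y + a • (z - x))‖^2/(2*1)) * rexp (-b * ‖z - x‖^2)
        = ((1-a)^2/2) * ((n:ℝ) * (2*b)⁻¹ * P) + (‖x - y‖^2/2) * P := by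
      simp only [hexp]
      have I1 : Integrable (fun z : EuclideanSpace ℝ (Fin n) =>
          ((1-a)^2/2) * (‖z - x‖^2 * rexp (-b * ‖z - x‖^2))
            + (1-a) * ((inner ℝ (z - x) (x - y) : ℝ) * rexp (-b * ‖z - x‖^2))) volume :=
        (Isq.const_mul _).add (Iin.const_mul _)
      have I2 : Integrable (fun z : EuclideanSpace ℝ (Fin n) =>
          (‖x - y‖^2/2) * rexp (-b * ‖z - x‖^2)) volume := Ig.const_mul _
      have I3 : Integrable (fun z : EuclideanSpace ℝ (Fin n) =>
          ((1-a)^2/2) * (‖z - x‖^2 * rexp (-b * ‖z - x‖^2))) volume := Isq.const_mul _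
      have I4 : Integrable (fun z : EuclideanSpace ℝ (Fin n) =>
          (1-a) * ((inner ℝ (z - x) (x - y) : ℝ) * rexp (-b * ‖z - x‖^2))) volume :=
        Iin.const_mul _
      rw [integral_add I1 I2, integral_add I3 I4,
        integral_const_mul, integral_const_mul, integral_const_mul, jsq, jin, jg]
      ring
    have hPs : heatSG n s f y
        = cs * ∫ z : EuclideanSpace ℝ (Fin n), f z * rexp (-b' * ‖z - y‖^2) := by
      simp only [heatSG, hks, hcs_def]
    calc heatSG n t (hopfLax n 1 f) x
        = ct * ∫ z : EuclideanSpace ℝ (Fin n),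
            hopfLax n 1 f z * rexp (-b * ‖z - x‖^2) := by
          simp only [heatSG, hkt, hct_def]
      _ ≤ ct * ∫ z : EuclideanSpace ℝ (Fin n),
            (f (y + a • (z - x)) + ‖z - (y + a • (z - x))‖^2/(2*1)) * rexp (-b * ‖z - x‖^2) :=
          mul_le_mul_of_nonneg_left (integral_mono IQ IAB hpt) hct.le
      _ = ct * ((∫ z : EuclideanSpace ℝ (Fin n), f (y + a • (z - x)) * rexp (-b * ‖z - x‖^2))
            + ∫ z : EuclideanSpace ℝ (Fin n),
              (‖z - (y + a • (z - x))‖^2/(2*1)) * rexp (-b * ‖z - x‖^2)) := by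
          rw [← integral_add IA IB]
          congr 1
          apply integral_congr_ae
          exact Filter.Eventually.of_forall fun z => by ring
      _ = heatSG n s f y + ‖x - y‖^2/2 + (n:ℝ) * (Real.sqrt t - Real.sqrt s)^2 := by
          rw [hAval, hBval, hPs, mul_add]
          rw [← mul_assoc ct, hc1, hmom]
          rw [show ct * (((1-a)^2/2) * ((n:ℝ) * (2*t) * P) + (‖x - y‖^2/2) * P)
              = ((n:ℝ) * (t * (1-a)^2) + ‖x - y‖^2/2) * (ct * P) from by ring, hc2, hts]
          ring
  -- conclude by taking the infimum over y
  rw [← sub_le_iff_le_add]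
  refine le_ciInf fun y => ?_
  rw [sub_le_iff_le_add]
  have h2 : (2 * (1:ℝ)) = 2 := by norm_num
  have := key y
  rw [h2]
  linarith
end
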